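/- arXiv:1302.4570 — 6 statements merged into one kernel-verified Lean document; each statement's English description precedes it below -/
import Mathlib

section
/- For h(x,y,z) = x(x² + y² + z²), at every point p with h(p) = 1 and x > 1/∛4, the Hessian ∂²h(p) is positive definite. Consequently there is no point p with h(p) = 1 at which −∂²h(p) restricted to ker dh(p) is positive definite (h is not hyperbolic). -/
/-!
At p = (x, y, z) the Hessian of h is `!![6x, 2y, 2z; 2y, 2x, 0; 2z, 0, 2x]`, and completing squares
gives, for v = (a, b, c),
  x · vᵀ ∂²h(p) v = 2 (x b + y a)² + 2 (x c + z a)² + 2 (3x² − y² − z²) a²,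
so ∂²h(p) is positive definite as soon as x > 0 and y² + z² < 3x². On {h = 1} we have
x (y² + z²) = 1 − x³, and this condition becomes 4x³ > 1.

For the second part, h(p) = 1 forces x > 0. The tangent space ker dh(p) contains a nonzero vector
(0, b, c), namely any (b, c) ≠ 0 orthogonal to (y, z), and on such vectors the Hessian form is
2x (b² + c²) ≥ 0, so −∂²h(p) is never positive definite there.
-/

/-- Partial derivative of a function of 3 real variables. -/
noncomputable def pd3 (f : (Fin 3 → ℝ) → ℝ) (i : Fin 3) (p : Fin 3 → ℝ) : ℝ :=
  deriv (fun t => f (Function.update p i t)) (p i)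

/-- Hessian matrix of second partial derivatives. -/
noncomputable def hess3 (f : (Fin 3 → ℝ) → ℝ) (p : Fin 3 → ℝ) : Matrix (Fin 3) (Fin 3) ℝ :=
  Matrix.of fun i j => pd3 (fun q => pd3 f j q) i p

open Matrix

lemma one_lt_mul_pow_of_inv_rpow_lt {a x : ℝ} {n : ℕ} (ha : 0 < a) (hn : n ≠ 0)
    (hx : 1 / a ^ ((1 : ℝ) / n) < x) : 1 < a * x ^ n := by
  have hroot : 0 < a ^ ((1 : ℝ) / n) := Real.rpow_pos_of_pos ha _
  have h1 : 1 < a ^ ((1 : ℝ) / n) * x := by rwa [div_lt_iff₀' hroot] at hx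
  calc 1 < (a ^ ((1 : ℝ) / n) * x) ^ n := one_lt_pow₀ h1 hn
    _ = a * x ^ n := by
      rw [mul_pow, ← Real.rpow_natCast, ← Real.rpow_mul ha.le,
        one_div_mul_cancel (by exact_mod_cast hn), Real.rpow_one]

lemma exists_ne_zero_mul_add_mul_eq_zero (y z : ℝ) :
    ∃ b c : ℝ, (b ≠ 0 ∨ c ≠ 0) ∧ y * b + z * c = 0 := by
  by_cases hyz : y = 0 ∧ z = 0
  · exact ⟨1, 0, by simp, by simp [hyz.1, hyz.2]⟩
  · exact ⟨-z, y, by rw [neg_ne_zero]; tauto, by ring⟩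

def cubic (p : Fin 3 → ℝ) : ℝ := p 0 * (p 0 ^ 2 + p 1 ^ 2 + p 2 ^ 2)

lemma pd3_cubic (p : Fin 3 → ℝ) (i : Fin 3) :
    pd3 cubic i p = ![3 * p 0 ^ 2 + p 1 ^ 2 + p 2 ^ 2, 2 * p 0 * p 1, 2 * p 0 * p 2] i := by
  fin_cases i <;> simp [pd3, cubic] <;> ring

lemma hess3_cubic (p : Fin 3 → ℝ) :
    hess3 cubic p = !![6 * p 0, 2 * p 1, 2 * p 2; 2 * p 1, 2 * p 0, 0; 2 * p 2, 0, 2 * p 0] := by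
  ext i j
  simp only [hess3, of_apply, pd3_cubic]
  fin_cases i <;> fin_cases j <;> simp [pd3]
  ring

lemma sum_pd3_cubic_mul (p v : Fin 3 → ℝ) :
    ∑ i, pd3 cubic i p * v i =
      (3 * p 0 ^ 2 + p 1 ^ 2 + p 2 ^ 2) * v 0 + 2 * p 0 * (p 1 * v 1 + p 2 * v 2) := by
  simp only [pd3_cubic, Fin.sum_univ_three, cons_val_zero, cons_val_one, cons_val]
  ring

lemma dotProduct_hess3_cubic_mulVec (p v : Fin 3 → ℝ) :
    v ⬝ᵥ (hess3 cubic p *ᵥ v) =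
      6 * p 0 * v 0 ^ 2 + 4 * v 0 * (p 1 * v 1 + p 2 * v 2) + 2 * p 0 * (v 1 ^ 2 + v 2 ^ 2) := by
  simp only [dotProduct, mulVec, hess3_cubic, of_apply, cons_val', cons_val_fin_one,
    Fin.sum_univ_three, cons_val_zero, cons_val_one, cons_val, zero_mul, add_zero]
  ring

lemma hess3_cubic_posDef {p : Fin 3 → ℝ} (hx : 0 < p 0)
    (hyz : p 1 ^ 2 + p 2 ^ 2 < 3 * p 0 ^ 2) : (hess3 cubic p).PosDef := by
  refine posDef_iff_dotProduct_mulVec.mpr ⟨?_, fun v hv => ?_⟩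
  · rw [hess3_cubic]
    ext i j
    fin_cases i <;> fin_cases j <;> simp
  · rw [star_trivial, dotProduct_hess3_cubic_mulVec]
    set x := p 0
    by_cases hv0 : v 0 = 0
    · have hv12 : v 1 ≠ 0 ∨ v 2 ≠ 0 := by
        by_contra! h
        exact hv (funext fun i => by fin_cases i <;> simp [hv0, h.1, h.2])
      have hb : 0 < v 1 ^ 2 + v 2 ^ 2 := by rcases hv12 with h | h <;> positivity
      rw [hv0]
      linarith [mul_pos (mul_pos two_pos hx) hb]
    · have hsq : x * (6 * x * v 0 ^ 2 + 4 * v 0 * (p 1 * v 1 + p 2 * v 2) +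
            2 * x * (v 1 ^ 2 + v 2 ^ 2)) =
          2 * (x * v 1 + p 1 * v 0) ^ 2 + 2 * (x * v 2 + p 2 * v 0) ^ 2 +
            2 * (3 * x ^ 2 - p 1 ^ 2 - p 2 ^ 2) * v 0 ^ 2 := by ring
      have : 0 < 3 * x ^ 2 - p 1 ^ 2 - p 2 ^ 2 := by linarith
      exact pos_of_mul_pos_right (hsq ▸ by positivity) hx.le

lemma pos_of_cubic_pos {p : Fin 3 → ℝ} (hp : 0 < cubic p) : 0 < p 0 :=
  pos_of_mul_pos_left hp (by positivity)

lemma sq_add_sq_lt_of_cubic_eq_one {p : Fin 3 → ℝ} (hp : cubic p = 1) (hx : 1 < 4 * p 0 ^ 3) :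
    p 1 ^ 2 + p 2 ^ 2 < 3 * p 0 ^ 2 := by
  have hx0 : 0 < p 0 := pos_of_cubic_pos (hp ▸ one_pos)
  refine lt_of_mul_lt_mul_left ?_ hx0.le
  unfold cubic at hp
  linarith

lemma exists_ne_zero_tangent_hess3_cubic_nonneg {p : Fin 3 → ℝ} (hx : 0 < p 0) :
    ∃ v ≠ 0, ∑ i, pd3 cubic i p * v i = 0 ∧ 0 ≤ v ⬝ᵥ (hess3 cubic p *ᵥ v) := by
  obtain ⟨b, c, hbc, horth⟩ := exists_ne_zero_mul_add_mul_eq_zero (p 1) (p 2)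
  refine ⟨![0, b, c], fun h => ?_, ?_, ?_⟩
  · rcases hbc with hb | hc
    · exact hb (congrFun h 1)
    · exact hc (congrFun h 2)
  · simp [sum_pd3_cubic_mul, horth]
  · rw [dotProduct_hess3_cubic_mulVec]
    simp only [cons_val_zero, cons_val_one, cons_val, ne_eq, OfNat.ofNat_ne_zero,
      not_false_eq_true, zero_pow, mul_zero, zero_mul, zero_add]
    positivity

/-- For h(x,y,z) = x(x² + y² + z²): at every point of {h = 1} with x > 1/∛4 the
Hessian ∂²h is positive definite; consequently there is no point of {h = 1} at which
−∂²h is positive definite on ker dh, i.e. h is not hyperbolic. -/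
theorem stmt2 (h : (Fin 3 → ℝ) → ℝ)
    (hdef : ∀ p : Fin 3 → ℝ, h p = p 0 * ((p 0) ^ 2 + (p 1) ^ 2 + (p 2) ^ 2)) :
    (∀ p : Fin 3 → ℝ, h p = 1 → (1 : ℝ) / (4 : ℝ) ^ ((1 : ℝ) / 3) < p 0 →
      (hess3 h p).PosDef) ∧
    ¬ ∃ p : Fin 3 → ℝ, h p = 1 ∧
      ∀ v : Fin 3 → ℝ, v ≠ 0 → (∑ i, pd3 h i p * v i) = 0 →
        0 < dotProduct v ((-(hess3 h p)).mulVec v) := by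
  obtain rfl : h = cubic := funext hdef
  refine ⟨fun p hp hx => ?_, fun ⟨p, hp, hneg⟩ => ?_⟩
  · have h4 : 1 < 4 * p 0 ^ 3 :=
      one_lt_mul_pow_of_inv_rpow_lt (by norm_num) three_ne_zero (by exact_mod_cast hx)
    exact hess3_cubic_posDef (pos_of_cubic_pos (hp ▸ one_pos)) (sq_add_sq_lt_of_cubic_eq_one hp h4)
  · obtain ⟨v, hv, htangent, hnonneg⟩ :=
      exists_ne_zero_tangent_hess3_cubic_nonneg (pos_of_cubic_pos (hp ▸ one_pos))
    have hpos := hneg v hv htangent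
    rw [neg_mulVec, dotProduct_neg] at hpos
    linarith
end

section
/- For h(x,y,z) = z(x² + y² − z²), every point (x,y,z) with h(x,y,z) = 1 and z < 0 satisfies z ≤ −1, and at such points det ∂²h = −8(4z³ + h) > 0. -/
/-- For h(x,y,z) = z(x² + y² − z²): if h = 1 and z < 0 then z ≤ −1 and
det ∂²h = −8(4z³ + h) > 0. -/
theorem stmt3 (h : (Fin 3 → ℝ) → ℝ)
    (hdef : ∀ p : Fin 3 → ℝ, h p = p 2 * ((p 0) ^ 2 + (p 1) ^ 2 - (p 2) ^ 2)) :
    ∀ p : Fin 3 → ℝ, h p = 1 → p 2 < 0 →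
      p 2 ≤ -1 ∧ (hess3 h p).det = -8 * (4 * (p 2) ^ 3 + h p) ∧ 0 < (hess3 h p).det := by
  have pd0 : ∀ q : Fin 3 → ℝ, pd3 h 0 q = 2 * q 0 * q 2 := by
    intro q
    unfold pd3
    simp only [hdef, Function.update_apply]
    norm_num
    have H := (((hasDerivAt_pow 2 (q 0)).add_const (q 1 ^ 2)).sub_const (q 2 ^ 2)).const_mul (q 2)
    exact H.deriv.trans (by norm_num; ring)
  have pd1 : ∀ q : Fin 3 → ℝ, pd3 h 1 q = 2 * q 1 * q 2 := by
    intro q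
    unfold pd3
    simp only [hdef, Function.update_apply]
    norm_num
    have H := (((hasDerivAt_pow 2 (q 1)).const_add (q 0 ^ 2)).sub_const (q 2 ^ 2)).const_mul (q 2)
    exact H.deriv.trans (by norm_num; ring)
  have pd2 : ∀ q : Fin 3 → ℝ, pd3 h 2 q = q 0 ^ 2 + q 1 ^ 2 - 3 * q 2 ^ 2 := by
    intro q
    unfold pd3
    simp only [hdef, Function.update_apply]
    norm_num
    have H := (hasDerivAt_id (q 2)).mul ((hasDerivAt_pow 2 (q 2)).const_sub (q 0 ^ 2 + q 1 ^ 2))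
    simp only [id_eq] at H
    exact H.deriv.trans (by norm_num; ring)
  intro p hp1 hpz
  have hle : p 2 ≤ -1 := by
    have key : h p = p 2 * (p 0 ^ 2 + p 1 ^ 2) - p 2 ^ 3 := by rw [hdef]; ring
    nlinarith [sq_nonneg (p 0), sq_nonneg (p 1), sq_nonneg (p 2 + 1), sq_nonneg (p 2 - 1),
      mul_nonneg (neg_pos.mpr hpz).le (sq_nonneg (p 0)),
      mul_nonneg (neg_pos.mpr hpz).le (sq_nonneg (p 1))]
  have e00 : hess3 h p 0 0 = 2 * p 2 := by
    show pd3 (fun q => pd3 h 0 q) 0 p = _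
    simp only [pd0]
    unfold pd3
    simp only [Function.update_apply]
    norm_num
    have H := ((hasDerivAt_id (p 0)).const_mul 2).mul_const (p 2)
    simp only [id_eq] at H
    exact H.deriv.trans (by norm_num)
  have e01 : hess3 h p 0 1 = 0 := by
    show pd3 (fun q => pd3 h 1 q) 0 p = _
    simp only [pd1]
    unfold pd3
    simp [Function.update_apply, Fin.ext_iff]
  have e02 : hess3 h p 0 2 = 2 * p 0 := by
    show pd3 (fun q => pd3 h 2 q) 0 p = _
    simp only [pd2]
    unfold pd3
    simp only [Function.update_apply]
    norm_num
    have H := ((hasDerivAt_pow 2 (p 0)).add_const (p 1 ^ 2)).sub_const (3 * p 2 ^ 2)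
    exact H.deriv.trans (by norm_num)
  have e10 : hess3 h p 1 0 = 0 := by
    show pd3 (fun q => pd3 h 0 q) 1 p = _
    simp only [pd0]
    unfold pd3
    simp [Function.update_apply, Fin.ext_iff]
  have e11 : hess3 h p 1 1 = 2 * p 2 := by
    show pd3 (fun q => pd3 h 1 q) 1 p = _
    simp only [pd1]
    unfold pd3
    simp only [Function.update_apply]
    norm_num
    have H := ((hasDerivAt_id (p 1)).const_mul 2).mul_const (p 2)
    simp only [id_eq] at H
    exact H.deriv.trans (by norm_num)
  have e12 : hess3 h p 1 2 = 2 * p 1 := by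
    show pd3 (fun q => pd3 h 2 q) 1 p = _
    simp only [pd2]
    unfold pd3
    simp only [Function.update_apply]
    norm_num
    have H := ((hasDerivAt_pow 2 (p 1)).const_add (p 0 ^ 2)).sub_const (3 * p 2 ^ 2)
    exact H.deriv.trans (by norm_num)
  have e20 : hess3 h p 2 0 = 2 * p 0 := by
    show pd3 (fun q => pd3 h 0 q) 2 p = _
    simp only [pd0]
    unfold pd3
    simp only [Function.update_apply]
    norm_num
    have H := ((hasDerivAt_id (p 2)).const_mul (2 * p 0))
    simp only [id_eq] at H
    exact H.deriv.trans (by norm_num)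
  have e21 : hess3 h p 2 1 = 2 * p 1 := by
    show pd3 (fun q => pd3 h 1 q) 2 p = _
    simp only [pd1]
    unfold pd3
    simp only [Function.update_apply]
    norm_num
    have H := ((hasDerivAt_id (p 2)).const_mul (2 * p 1))
    simp only [id_eq] at H
    exact H.deriv.trans (by norm_num)
  have e22 : hess3 h p 2 2 = -6 * p 2 := by
    show pd3 (fun q => pd3 h 2 q) 2 p = _
    simp only [pd2]
    unfold pd3
    simp only [Function.update_apply]
    norm_num
    have H := ((hasDerivAt_pow 2 (p 2)).const_mul 3).const_sub (p 0 ^ 2 + p 1 ^ 2)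
    exact H.deriv.trans (by norm_num; ring)
  have hdet : (hess3 h p).det = -8 * (4 * p 2 ^ 3 + h p) := by
    rw [Matrix.det_fin_three, e00, e01, e02, e10, e11, e12, e20, e21, e22, hdef]
    ring
  refine ⟨hle, hdet, ?_⟩
  rw [hdet, hdef]
  nlinarith [sq_nonneg (p 0), sq_nonneg (p 1),
    mul_nonneg (neg_pos.mpr hpz).le (sq_nonneg (p 0)),
    mul_nonneg (neg_pos.mpr hpz).le (sq_nonneg (p 1)),
    mul_pos (mul_pos (neg_pos.mpr hpz) (neg_pos.mpr hpz)) (neg_pos.mpr hpz)]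
end

section
/- Let −1 < b < 1. Then the quartic polynomial g(x) = −16x⁴ + 24x² + 16bx + 3 has exactly two real roots. -/
/-- For −1 < b < 1, the quartic g(x) = −16x⁴ + 24x² + 16bx + 3 has exactly two
real roots. -/
theorem stmt10 (b : ℝ) (hb : -1 < b) (hb' : b < 1) :
    ∃ r₁ r₂ : ℝ, r₁ ≠ r₂ ∧
      {x : ℝ | -16 * x ^ 4 + 24 * x ^ 2 + 16 * b * x + 3 = 0} = {r₁, r₂} := by
  have h1b : (0:ℝ) < 1 - b ^ 2 := by nlinarith
  set c : ℝ := (1 - b ^ 2) ^ ((1:ℝ)/3) with hc_def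
  have hcpos : 0 < c := Real.rpow_pos_of_pos h1b _
  have hc3 : c ^ 3 = 1 - b ^ 2 := by
    rw [hc_def, ← Real.rpow_natCast ((1 - b ^ 2) ^ ((1:ℝ)/3)) 3,
      ← Real.rpow_mul h1b.le]
    norm_num
  clear_value c
  set Q : ℝ := (1 + 2*c) ^ 2 + 3 with hQ_def
  have hQpos : 0 < Q := by positivity
  set sq : ℝ := Real.sqrt Q with hsq_def
  have hsqpos : 0 < sq := Real.sqrt_pos.mpr hQpos
  have hsq2 : sq ^ 2 = Q := Real.sq_sqrt hQpos.le
  clear_value sq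
  clear_value Q
  have hsq_gt : 2 + c < sq := by
    nlinarith [hsq2, hsqpos, sq_nonneg (sq - (2 + c)), hcpos, hQ_def]
  set D : ℝ := -(1 + 2*c) + sq with hD_def
  set C : ℝ := -(1 + 2*c) - sq with hC_def
  set t : ℝ := -4*b/sq with ht_def
  clear_value D C t
  have ht2 : t ^ 2 = 4 * (1 - c) := by
    rw [ht_def, div_pow, hsq2, div_eq_iff hQpos.ne', hQ_def]
    ring_nf
    linear_combination (16:ℝ) * hc3
  have hCD : C * D = -3 := by
    rw [hC_def, hD_def]
    linear_combination -hsq2 - hQ_def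
  have hsum : C + D = t ^ 2 - 6 := by
    rw [hC_def, hD_def, ht2]; ring
  have htDC : t * (D - C) = -8 * b := by
    rw [ht_def, hD_def, hC_def]
    field_simp
    ring
  -- factorization identity
  have hfact : ∀ x : ℝ, -16 * x ^ 4 + 24 * x ^ 2 + 16 * b * x + 3
      = -((4*x^2 + 2*t*x + C) * (4*x^2 - 2*t*x + D)) := by
    intro x
    linear_combination (4*x^2) * hsum + (2*x) * htDC + hCD
  -- second factor is always positive
  have hpos : ∀ x : ℝ, 0 < 4*x^2 - 2*t*x + D := by
    intro x
    have hD' : 0 < D - t^2/4 := by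
      rw [hD_def, ht2]; nlinarith [hsq_gt]
    nlinarith [sq_nonneg (x - t/4)]
  -- roots of the first factor
  have hs2pos : 0 < t ^ 2 - 4 * C := by
    rw [hC_def, ht2]; nlinarith [hsqpos, hcpos]
  set s : ℝ := Real.sqrt (t ^ 2 - 4 * C) with hs_def
  have hspos : 0 < s := Real.sqrt_pos.mpr hs2pos
  have hs2 : s ^ 2 = t ^ 2 - 4 * C := Real.sq_sqrt hs2pos.le
  clear_value s
  refine ⟨(-t - s)/4, (-t + s)/4, by intro h; nlinarith, ?_⟩
  have key : ∀ r : ℝ, 4*r^2 + 2*t*r + C = 0 →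
      -16 * r ^ 4 + 24 * r ^ 2 + 16 * b * r + 3 = 0 := by
    intro r hr
    rw [hfact r]
    linear_combination (-(4*r^2 - 2*t*r + D)) * hr
  ext x
  simp only [Set.mem_setOf_eq, Set.mem_insert_iff, Set.mem_singleton_iff]
  constructor
  · intro hx
    rw [hfact x] at hx
    have h1 : (4*x^2 + 2*t*x + C) * (4*x^2 - 2*t*x + D) = 0 := by linarith
    have h2 : 4*x^2 + 2*t*x + C = 0 := by
      rcases mul_eq_zero.mp h1 with h | h
      · exact h
      · exact absurd h (hpos x).ne'
    have h3 : (4 * (x - (-t - s)/4)) * (x - (-t + s)/4) = 0 := by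
      linear_combination h2 - (1/4 : ℝ) * hs2
    rcases mul_eq_zero.mp h3 with h | h
    · rcases mul_eq_zero.mp h with h | h
      · norm_num at h
      · left; linarith [sub_eq_zero.mp h]
    · right; linarith [sub_eq_zero.mp h]
  · intro hx
    rcases hx with h | h <;> subst h <;>
      exact key _ (by linear_combination (1/4 : ℝ) * hs2)
end

section
/- Let −1 < b < 1 and let x₂ < x₃ be the two smallest roots of 4x³ − 3x − b. Then for every (x,y) with x₂ < x < x₃ and y² < 4x³ − 3x − b, the quantity 12x(x + b) + 3 − 4xy² is strictly positive. -/
/-- For −1 < b < 1 and x₂ < x₃ the two smallest roots of 4x³ − 3x − b: whenever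
x₂ < x < x₃ and y² < 4x³ − 3x − b, one has 12x(x+b) + 3 − 4xy² > 0. -/
theorem stmt11 (b x₂ x₃ : ℝ) (hb : -1 < b) (hb' : b < 1)
    (hroot₂ : 4 * x₂ ^ 3 - 3 * x₂ - b = 0)
    (hroot₃ : 4 * x₃ ^ 3 - 3 * x₃ - b = 0)
    (hlt : x₂ < x₃)
    (hmin : ∀ x : ℝ, 4 * x ^ 3 - 3 * x - b = 0 → x₂ ≤ x)
    (hmin' : ∀ x : ℝ, 4 * x ^ 3 - 3 * x - b = 0 → x ≠ x₂ → x₃ ≤ x) :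
    ∀ x y : ℝ, x₂ < x → x < x₃ → y ^ 2 < 4 * x ^ 3 - 3 * x - b →
      0 < 12 * x * (x + b) + 3 - 4 * x * y ^ 2 := by
  -- First: x₃ < 1/2, via two roots below 1/2.
  have hcont : ContinuousOn (fun x : ℝ => 4 * x ^ 3 - 3 * x - b) (Set.Icc (-1 : ℝ) (-1/2)) := by
    fun_prop
  have hcont' : ContinuousOn (fun x : ℝ => 4 * x ^ 3 - 3 * x - b) (Set.Icc (-1/2 : ℝ) (1/2)) := by
    fun_prop
  have h1 : (0 : ℝ) ∈ (fun x : ℝ => 4 * x ^ 3 - 3 * x - b) '' Set.Ioo (-1 : ℝ) (-1/2) := by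
    apply intermediate_value_Ioo (by norm_num) hcont
    constructor <;> { show _ < _; norm_num; nlinarith }
  have h2 : (0 : ℝ) ∈ (fun x : ℝ => 4 * x ^ 3 - 3 * x - b) '' Set.Ioo (-1/2 : ℝ) (1/2) := by
    apply intermediate_value_Ioo' (by norm_num) hcont'
    constructor <;> { show _ < _; norm_num; nlinarith }
  obtain ⟨r₁, hr₁mem, hr₁⟩ := h1
  obtain ⟨r₂, hr₂mem, hr₂⟩ := h2
  
  have hx2r1 : x₂ ≤ r₁ := hmin r₁ hr₁
  have hne : r₂ ≠ x₂ := by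
    intro h
    have := hr₁mem.2
    have := hr₂mem.1
    linarith [h ▸ hx2r1]
  have hx3 : x₃ < 1/2 := lt_of_le_of_lt (hmin' r₂ hr₂ hne) hr₂mem.2
  intro x y hx2 hxx3 hy
  have hy0 : (0:ℝ) ≤ y ^ 2 := sq_nonneg y
  rcases le_or_gt x 0 with hx | hx
  · nlinarith [sq_nonneg (2*x + b), mul_nonneg (neg_nonneg.mpr hx) hy0]
  · have hxh : x < 1/2 := lt_trans hxx3 hx3
    have h4x : 0 < 4 * x := by linarith
    have hkey := mul_pos h4x (sub_pos.mpr hy)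
    have h1x : (0:ℝ) ≤ 1 - 2*x := by linarith
    have h2x : (0:ℝ) ≤ 2*x + 3 := by linarith
    nlinarith [mul_nonneg (mul_nonneg (mul_nonneg h1x h1x) h1x) h2x,
      mul_pos hx (show (0:ℝ) < b + 1 by linarith)]
end

section
/- On ℝ², the Riemannian metric g = (1/s²)ds² + s³(t² + R² + √((t² + R)² + 1))dt² on the half-plane {s > 0} (coordinates (s,t)) is complete, for any R ∈ ℝ. -/
open MeasureTheory

private lemma aux1 (s a X : ℝ) (hs : 0 < s) (hX : 0 ≤ X) :
    |a| / s ≤ Real.sqrt (1 / s ^ 2 * a ^ 2 + X) := by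
  rw [Real.le_sqrt (by positivity) (by positivity)]
  rw [div_pow, sq_abs]
  have h : 1 / s ^ 2 * a ^ 2 = a ^ 2 / s ^ 2 := by ring
  rw [h]; linarith

private lemma aux2 (s b c X : ℝ) (hs : 0 < s) (hc : 1 ≤ c) (hX : 0 ≤ X) :
    Real.sqrt (s ^ 3) * |b| ≤ Real.sqrt (X + s ^ 3 * c * b ^ 2) := by
  have h3 : (0:ℝ) < s ^ 3 := by positivity
  have hb : (0:ℝ) ≤ b ^ 2 := sq_nonneg b
  have hcb : (0:ℝ) ≤ s ^ 3 * c * b ^ 2 :=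
    mul_nonneg (mul_nonneg h3.le (by linarith)) hb
  rw [Real.le_sqrt (by positivity) (by linarith)]
  rw [mul_pow, sq_abs, Real.sq_sqrt h3.le]
  nlinarith [mul_le_mul_of_nonneg_left hc (mul_nonneg h3.le hb)]

/-- The Riemannian metric g = (1/s²)ds² + s³(t² + R² + √((t² + R)² + 1))dt² on the
half-plane {s > 0} is complete: every C¹ curve γ : [0,∞) → {s > 0} × ℝ that
eventually leaves every compact subset of the half-plane has infinite length. -/
theorem stmt17 (R : ℝ) :
    ∀ γ : ℝ → ℝ × ℝ, Differentiable ℝ γ → (∀ t : ℝ, 0 < (γ t).1) →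
      (∀ K : Set (ℝ × ℝ), IsCompact K → K ⊆ {p : ℝ × ℝ | 0 < p.1} →
        ∃ T : ℝ, ∀ t : ℝ, T ≤ t → γ t ∉ K) →
      ∫⁻ t in Set.Ioi (0 : ℝ),
        ENNReal.ofReal (Real.sqrt
          ((1 / (γ t).1 ^ 2) * (deriv (fun u => (γ u).1) t) ^ 2 +
            (γ t).1 ^ 3 * ((γ t).2 ^ 2 + R ^ 2 +
              Real.sqrt (((γ t).2 ^ 2 + R) ^ 2 + 1)) *
              (deriv (fun u => (γ u).2) t) ^ 2)) = ⊤ := by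
  intro γ hγ hpos hleave
  by_contra hI
  set d₁ : ℝ → ℝ := deriv (fun u => (γ u).1) with hd₁
  set d₂ : ℝ → ℝ := deriv (fun u => (γ u).2) with hd₂
  set f : ℝ → ℝ := fun τ => Real.sqrt
          ((1 / (γ τ).1 ^ 2) * (d₁ τ) ^ 2 +
            (γ τ).1 ^ 3 * ((γ τ).2 ^ 2 + R ^ 2 +
              Real.sqrt (((γ τ).2 ^ 2 + R) ^ 2 + 1)) *
              (d₂ τ) ^ 2) with hf_def
  have hI' : (∫⁻ t in Set.Ioi (0 : ℝ), ENNReal.ofReal (f t)) ≠ ⊤ := hI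
  have hfnn : ∀ τ, 0 ≤ f τ := fun τ => Real.sqrt_nonneg _
  -- coefficient ≥ 1
  have hcoeff : ∀ τ, (1:ℝ) ≤ (γ τ).2 ^ 2 + R ^ 2 + Real.sqrt (((γ τ).2 ^ 2 + R) ^ 2 + 1) := by
    intro τ
    have h1 : (1:ℝ) ≤ Real.sqrt (((γ τ).2 ^ 2 + R) ^ 2 + 1) :=
      (Real.le_sqrt zero_le_one (by positivity)).2
        (by nlinarith [sq_nonneg ((γ τ).2 ^ 2 + R)])
    nlinarith [sq_nonneg (γ τ).2, sq_nonneg R]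
  have hXnn : ∀ τ, (0:ℝ) ≤ (γ τ).1 ^ 3 * ((γ τ).2 ^ 2 + R ^ 2 +
      Real.sqrt (((γ τ).2 ^ 2 + R) ^ 2 + 1)) * (d₂ τ) ^ 2 := by
    intro τ
    have := hpos τ
    have h1 := hcoeff τ
    positivity
  -- measurability and integrability of f
  have hm1 : Measurable (fun u => (γ u).1) := (continuous_fst.comp hγ.continuous).measurable
  have hm2 : Measurable (fun u => (γ u).2) := (continuous_snd.comp hγ.continuous).measurable
  have hmd₁ : Measurable d₁ := measurable_deriv _
  have hmd₂ : Measurable d₂ := measurable_deriv _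
  have hmf : Measurable f := by
    apply Measurable.sqrt
    exact (((measurable_const.div (hm1.pow_const 2)).mul (hmd₁.pow_const 2)).add
      (((hm1.pow_const 3).mul ((((hm2.pow_const 2).add_const (R^2)).add
        (((hm2.pow_const 2).add_const R).pow_const 2 |>.add_const 1).sqrt))).mul (hmd₂.pow_const 2)))
  have hint : IntegrableOn f (Set.Ioi (0:ℝ)) := by
    refine ⟨hmf.aestronglyMeasurable.restrict, ?_⟩
    rw [hasFiniteIntegral_iff_ofReal (Filter.Eventually.of_forall hfnn)]
    exact Ne.lt_top hI'
  set L := ∫ τ in Set.Ioi (0:ℝ), f τ with hL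
  have hLnn : 0 ≤ L := setIntegral_nonneg measurableSet_Ioi (fun τ _ => hfnn τ)
  -- pointwise bounds
  have hb1 : ∀ τ, |d₁ τ| / (γ τ).1 ≤ f τ := fun τ => aux1 _ _ _ (hpos τ) (hXnn τ)
  have hb2' : ∀ τ, Real.sqrt ((γ τ).1 ^ 3) * |d₂ τ| ≤ f τ := by
    intro τ
    exact aux2 _ _ _ _ (hpos τ) (hcoeff τ) (by positivity)
  -- interval integrability of f
  have hfIoc : ∀ T : ℝ, IntegrableOn f (Set.Ioc (0:ℝ) T) :=
    fun T => hint.mono_set Set.Ioc_subset_Ioi_self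
  have hfii : ∀ T : ℝ, 0 ≤ T → IntervalIntegrable f volume 0 T :=
    fun T hT => (intervalIntegrable_iff_integrableOn_Ioc_of_le hT).2 (hfIoc T)
  have hfIocL : ∀ T : ℝ, 0 ≤ T → (∫ x in (0:ℝ)..T, f x) ≤ L := by
    intro T hT
    rw [intervalIntegral.integral_of_le hT]
    exact setIntegral_mono_set hint (Filter.Eventually.of_forall hfnn)
      (HasSubset.Subset.eventuallyLE Set.Ioc_subset_Ioi_self)
  -- bound on log of first coordinate
  have hlog : ∀ T, 0 ≤ T →
      |Real.log ((γ T).1) - Real.log ((γ 0).1)| ≤ L := by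
    intro T hT
    have hder : ∀ x ∈ Set.uIcc (0:ℝ) T,
        HasDerivAt (fun u => Real.log ((γ u).1)) (d₁ x / (γ x).1) x := fun x _ =>
      ((hγ.fst x).hasDerivAt).log (ne_of_gt (hpos x))
    have hg1m : AEStronglyMeasurable (fun x => d₁ x / (γ x).1)
        (volume.restrict (Set.Ioc (0:ℝ) T)) :=
      (hmd₁.div hm1).aestronglyMeasurable.restrict
    have hg1int : IntegrableOn (fun x => d₁ x / (γ x).1) (Set.Ioc (0:ℝ) T) := by
      refine Integrable.mono (hfIoc T) hg1m (Filter.Eventually.of_forall fun x => ?_)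
      rw [Real.norm_eq_abs, Real.norm_eq_abs, abs_div, abs_of_pos (hpos x),
        abs_of_nonneg (hfnn x)]
      exact hb1 x
    have hii : IntervalIntegrable (fun x => d₁ x / (γ x).1) volume 0 T :=
      (intervalIntegrable_iff_integrableOn_Ioc_of_le hT).2 hg1int
    have hftc := intervalIntegral.integral_eq_sub_of_hasDerivAt hder hii
    calc |Real.log ((γ T).1) - Real.log ((γ 0).1)|
        = |∫ x in (0:ℝ)..T, d₁ x / (γ x).1| := by rw [hftc]
      _ ≤ ∫ x in (0:ℝ)..T, |d₁ x / (γ x).1| :=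
          intervalIntegral.abs_integral_le_integral_abs hT
      _ ≤ ∫ x in (0:ℝ)..T, f x := by
          refine intervalIntegral.integral_mono_on hT hii.abs (hfii T hT) fun x _ => ?_
          rw [abs_div, abs_of_pos (hpos x)]
          exact hb1 x
      _ ≤ L := hfIocL T hT
  set a := Real.exp (Real.log ((γ 0).1) - L) with ha
  set b := Real.exp (Real.log ((γ 0).1) + L) with hb
  have hapos : 0 < a := Real.exp_pos _
  have hsab : ∀ T, 0 ≤ T → (γ T).1 ∈ Set.Icc a b := by
    intro T hT
    obtain ⟨h1, h2⟩ := abs_le.1 (hlog T hT)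
    have hTrw : (γ T).1 = Real.exp (Real.log ((γ T).1)) := (Real.exp_log (hpos T)).symm
    constructor
    · rw [hTrw]; exact Real.exp_le_exp.2 (by linarith)
    · rw [hTrw]; exact Real.exp_le_exp.2 (by linarith)
  -- bound on second coordinate
  have ha3 : 0 < Real.sqrt (a ^ 3) := Real.sqrt_pos.2 (by positivity)
  set C := (Real.sqrt (a ^ 3))⁻¹ with hC
  have hCnn : 0 ≤ C := inv_nonneg.2 ha3.le
  have hb2 : ∀ τ, 0 ≤ τ → |d₂ τ| ≤ C * f τ := by
    intro τ hτ
    have h2 : Real.sqrt (a ^ 3) ≤ Real.sqrt ((γ τ).1 ^ 3) :=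
      Real.sqrt_le_sqrt (pow_le_pow_left₀ hapos.le (hsab τ hτ).1 3)
    have h3 : Real.sqrt (a ^ 3) * |d₂ τ| ≤ f τ :=
      le_trans (mul_le_mul_of_nonneg_right h2 (abs_nonneg _)) (hb2' τ)
    rw [hC, inv_mul_eq_div, le_div_iff₀ ha3]
    linarith [h3, mul_comm (|d₂ τ|) (Real.sqrt (a ^ 3))]
  have ht : ∀ T, 0 ≤ T → |(γ T).2 - (γ 0).2| ≤ C * L := by
    intro T hT
    have hder : ∀ x ∈ Set.uIcc (0:ℝ) T,
        HasDerivAt (fun u => (γ u).2) (d₂ x) x := fun x _ =>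
      (hγ.snd x).hasDerivAt
    have hg2int : IntegrableOn d₂ (Set.Ioc (0:ℝ) T) := by
      refine Integrable.mono ((hfIoc T).const_mul C)
        hmd₂.aestronglyMeasurable.restrict ?_
      rw [ae_restrict_iff' measurableSet_Ioc]
      refine Filter.Eventually.of_forall fun x hx => ?_
      rw [Real.norm_eq_abs, Real.norm_eq_abs,
        abs_of_nonneg (mul_nonneg hCnn (hfnn x))]
      exact hb2 x hx.1.le
    have hii : IntervalIntegrable d₂ volume 0 T :=
      (intervalIntegrable_iff_integrableOn_Ioc_of_le hT).2 hg2int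
    have hftc := intervalIntegral.integral_eq_sub_of_hasDerivAt hder hii
    calc |(γ T).2 - (γ 0).2|
        = |∫ x in (0:ℝ)..T, d₂ x| := by rw [hftc]
      _ ≤ ∫ x in (0:ℝ)..T, |d₂ x| := intervalIntegral.abs_integral_le_integral_abs hT
      _ ≤ ∫ x in (0:ℝ)..T, C * f x := by
          refine intervalIntegral.integral_mono_on hT hii.abs
            (((hfii T hT).const_mul C)) fun x hx => hb2 x hx.1
      _ = C * ∫ x in (0:ℝ)..T, f x := intervalIntegral.integral_const_mul C f
      _ ≤ C * L := mul_le_mul_of_nonneg_left (hfIocL T hT) hCnn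
  -- the curve stays in a compact set: contradiction
  set K : Set (ℝ × ℝ) :=
    Set.Icc a b ×ˢ Set.Icc ((γ 0).2 - C * L) ((γ 0).2 + C * L) with hK
  have hKc : IsCompact K := isCompact_Icc.prod isCompact_Icc
  have hKsub : K ⊆ {p : ℝ × ℝ | 0 < p.1} := fun p hp =>
    lt_of_lt_of_le hapos hp.1.1
  obtain ⟨T₀, hT₀⟩ := hleave K hKc hKsub
  have hτ0 : (0:ℝ) ≤ max T₀ 0 := le_max_right _ _
  have hmem : γ (max T₀ 0) ∈ K := by
    refine ⟨hsab _ hτ0, ?_⟩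
    obtain ⟨h1, h2⟩ := abs_le.1 (ht _ hτ0)
    exact ⟨by linarith, by linarith⟩
  exact hT₀ _ (le_max_left _ _) hmem
end

section
/- Let h(x,y,z) = z(x² + y² − z²) on U = {z < 0, x² + y² < z²}, d = det ∂²h = −8(h + 4z³), and define scal = −15/2 − 12h(1/d − 16·48·z³·h/d³) on U (where h > 0 and d > 0). Then scal < −15/2 everywhere on U, and scal ≥ −8 − 2/3 everywhere on U, with equality scal = −26/3 at (0,0,−1). Indeed the inequalities reduce to (h − 2z³)² + 12z⁶ > 0, x² + y² ≥ 0, and (x² + y²)(x² + y² − 9z²)² ≥ 0. -/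
/-- For h = z(x² + y² − z²) on U = {z < 0, x² + y² < z²}, d = −8(h + 4z³), and
scal = −15/2 − 12h(1/d − 768 z³ h/d³): scal < −15/2 and scal ≥ −8 − 2/3 on U, with
equality scal = −8 − 2/3 at (0,0,−1). -/
theorem stmt19 (h d scal : ℝ → ℝ → ℝ → ℝ)
    (hdef : ∀ x y z : ℝ, h x y z = z * (x ^ 2 + y ^ 2 - z ^ 2))
    (ddef : ∀ x y z : ℝ, d x y z = -8 * (h x y z + 4 * z ^ 3))
    (sdef : ∀ x y z : ℝ, scal x y z =
      -(15 / 2) - 12 * h x y z *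
        (1 / d x y z - 16 * 48 * z ^ 3 * h x y z / (d x y z) ^ 3)) :
    (∀ x y z : ℝ, z < 0 → x ^ 2 + y ^ 2 < z ^ 2 →
      scal x y z < -(15 / 2) ∧ -8 - 2 / 3 ≤ scal x y z) ∧
    scal 0 0 (-1) = -8 - 2 / 3 := by
  constructor
  · intro x y z hz hlt
    have hz3 : z ^ 3 < 0 := by nlinarith
    have hH : 0 < h x y z := by rw [hdef]; nlinarith
    have hD : 0 < d x y z := by rw [ddef, hdef]; nlinarith
    have hD3 : 0 < (d x y z) ^ 3 := by positivity
    have hkey : 0 < (d x y z) ^ 2 - 768 * z ^ 3 * h x y z := by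
      rw [ddef]
      nlinarith [sq_nonneg (h x y z - 2 * z ^ 3), sq_nonneg (z ^ 3)]
    have hrw : 1 / d x y z - 16 * 48 * z ^ 3 * h x y z / (d x y z) ^ 3
        = ((d x y z) ^ 2 - 768 * z ^ 3 * h x y z) / (d x y z) ^ 3 := by
      field_simp
      ring
    rw [sdef, hrw]
    constructor
    · have : 0 < 12 * h x y z * (((d x y z) ^ 2 - 768 * z ^ 3 * h x y z) / (d x y z) ^ 3) :=
        by positivity
      linarith
    · have hs : (0:ℝ) ≤ x ^ 2 + y ^ 2 := by positivity
      have hnz : (0:ℝ) < -z := by linarith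
      have h1 : 0 ≤ (-z) ^ 3 * (x ^ 2 + y ^ 2) ^ 3 := by positivity
      have h2 : 0 ≤ (-z) ^ 7 * (x ^ 2 + y ^ 2) := by positivity
      have hpoly : 72 * h x y z * ((d x y z) ^ 2 - 768 * z ^ 3 * h x y z)
          ≤ 7 * (d x y z) ^ 3 := by
        rw [ddef, hdef]
        nlinarith [h1, h2]
      have hdiv : 12 * h x y z * (((d x y z) ^ 2 - 768 * z ^ 3 * h x y z) / (d x y z) ^ 3)
          ≤ 7 / 6 := by
        rw [← mul_div_assoc, div_le_div_iff₀ hD3 (by norm_num : (0:ℝ) < 6)]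
        nlinarith [hpoly]
      linarith
  · have hh : h 0 0 (-1) = 1 := by rw [hdef]; norm_num
    have hd : d 0 0 (-1) = 24 := by rw [ddef, hh]; norm_num
    rw [sdef, hh, hd]; norm_num
end
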